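/- arXiv:1208.4139 — 3 statements merged into one kernel-verified Lean document; each statement's English description precedes it below -/
import Mathlib

section
/- Let $(\Gamma_\ell)_{\ell \ge 0}$ be a sequence of operators with $\|\Gamma_0\| \le M$ for some $M > 0$, and suppose there are constants $t_0 > 0$ and $N_1 \ge 1$ such that $\|\Gamma_\ell\| \le M e^{\ell t_0}$ for all $\ell \le N_1$, and for every $\ell > N_1$ one has $\|\Gamma_\ell\| \le \ell^{-1} N_1 (1 - e^{-t_0}) \sum_{j=1}^{\ell-1} \|\Gamma_{\ell - j}\|$. Then $\|\Gamma_\ell\| \le M e^{\ell t_0}$ for all $\ell \ge 0$. -/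
/-! Strong induction on `ℓ`. For `ℓ > N₁` the induction hypothesis bounds the `j`-th term of
the sum by `M e^{ℓ t₀} r^j` with `r = e^{-t₀} < 1`, so the sum is at most
`M e^{ℓ t₀} / (1 - r)`; the factor `1 - r` cancels and `N₁ / ℓ ≤ 1` closes the step. -/

open Finset Real

lemma sum_Icc_exp_sub_mul_le {t : ℝ} (ht : 0 < t) (ℓ : ℕ) :
    ∑ j ∈ Icc 1 (ℓ - 1), exp (((ℓ - j : ℕ) : ℝ) * t) ≤ exp (ℓ * t) / (1 - exp (-t)) := by
  have hr : exp (-t) < 1 := exp_lt_one_iff.mpr (neg_neg_of_pos ht)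
  have hterm : ∀ j ∈ Icc 1 (ℓ - 1), exp (((ℓ - j : ℕ) : ℝ) * t) = exp (ℓ * t) * exp (-t) ^ j := by
    intro j hj
    have hjℓ : j ≤ ℓ := by grind
    rw [← exp_nat_mul, ← exp_add, Nat.cast_sub hjℓ]
    ring_nf
  have hgeom : ∑ j ∈ Icc 1 (ℓ - 1), exp (-t) ^ j ≤ 1 / (1 - exp (-t)) :=
    calc ∑ j ∈ Icc 1 (ℓ - 1), exp (-t) ^ j ≤ ∑ j ∈ Ico 1 ℓ, exp (-t) ^ j :=
          sum_le_sum_of_subset_of_nonneg (fun j hj => by grind) (fun _ _ _ => by positivity)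
      _ ≤ exp (-t) ^ 1 / (1 - exp (-t)) := geom_sum_Ico_le_of_lt_one (exp_nonneg _) hr
      _ ≤ 1 / (1 - exp (-t)) :=
          div_le_div_of_nonneg_right (pow_le_one₀ (exp_nonneg _) hr.le) (sub_nonneg.mpr hr.le)
  calc ∑ j ∈ Icc 1 (ℓ - 1), exp (((ℓ - j : ℕ) : ℝ) * t)
      = exp (ℓ * t) * ∑ j ∈ Icc 1 (ℓ - 1), exp (-t) ^ j := by rw [sum_congr rfl hterm, mul_sum]
    _ ≤ exp (ℓ * t) * (1 / (1 - exp (-t))) := by gcongr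
    _ = exp (ℓ * t) / (1 - exp (-t)) := mul_one_div _ _

theorem stmt0_general (c : ℕ → ℝ) (M t0 : ℝ) (N1 : ℕ)
    (hM : 0 < M) (ht0 : 0 < t0)
    (hbase : ∀ ℓ ≤ N1, c ℓ ≤ M * Real.exp (ℓ * t0))
    (hrec : ∀ ℓ, N1 < ℓ →
      c ℓ ≤ (ℓ : ℝ)⁻¹ * N1 * (1 - Real.exp (-t0)) * ∑ j ∈ Finset.Icc 1 (ℓ - 1), c (ℓ - j)) :
    ∀ ℓ, c ℓ ≤ M * Real.exp (ℓ * t0) := by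
  intro ℓ
  induction ℓ using Nat.strong_induction_on with
  | _ ℓ ih =>
    rcases le_or_gt ℓ N1 with hle | hlt
    · exact hbase ℓ hle
    have hr : 0 < 1 - exp (-t0) := sub_pos.mpr (exp_lt_one_iff.mpr (neg_neg_of_pos ht0))
    have hℓ : (0 : ℝ) < ℓ := by exact_mod_cast (Nat.zero_le N1).trans_lt hlt
    have hN1ℓ : (ℓ : ℝ)⁻¹ * N1 ≤ 1 := by
      rw [inv_mul_le_iff₀ hℓ, mul_one]; exact_mod_cast hlt.le
    have hsum : ∑ j ∈ Icc 1 (ℓ - 1), c (ℓ - j) ≤ M * (exp (ℓ * t0) / (1 - exp (-t0))) :=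
      calc ∑ j ∈ Icc 1 (ℓ - 1), c (ℓ - j)
          ≤ ∑ j ∈ Icc 1 (ℓ - 1), M * exp (((ℓ - j : ℕ) : ℝ) * t0) :=
            sum_le_sum fun j hj => ih (ℓ - j) (by grind)
        _ ≤ M * (exp (ℓ * t0) / (1 - exp (-t0))) := by
            rw [← mul_sum]; gcongr; exact sum_Icc_exp_sub_mul_le ht0 ℓ
    calc c ℓ ≤ (ℓ : ℝ)⁻¹ * N1 * (1 - exp (-t0)) * ∑ j ∈ Icc 1 (ℓ - 1), c (ℓ - j) := hrec ℓ hlt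
      _ ≤ (ℓ : ℝ)⁻¹ * N1 * (1 - exp (-t0)) * (M * (exp (ℓ * t0) / (1 - exp (-t0)))) := by
          gcongr
      _ = (ℓ : ℝ)⁻¹ * N1 * (M * exp (ℓ * t0)) := by field_simp
      _ ≤ M * exp (ℓ * t0) := mul_le_of_le_one_left (by positivity) hN1ℓ

/-- Induction step bounding the recursively defined coefficients `Γ_ℓ` in
Harish-Chandra's expansion: if `‖Γ_ℓ‖ ≤ M e^{ℓ t₀}` for all `ℓ ≤ N₁` and for `ℓ > N₁`
one has `‖Γ_ℓ‖ ≤ ℓ⁻¹ N₁ (1 - e^{-t₀}) ∑_{j=1}^{ℓ-1} ‖Γ_{ℓ-j}‖`, then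
`‖Γ_ℓ‖ ≤ M e^{ℓ t₀}` for all `ℓ`. Here `c ℓ = ‖Γ_ℓ‖ ≥ 0`. -/
theorem stmt0 (c : ℕ → ℝ) (M t0 : ℝ) (N1 : ℕ)
    (hc : ∀ ℓ, 0 ≤ c ℓ) (hM : 0 < M) (ht0 : 0 < t0) (hN1 : 1 ≤ N1)
    (hc0 : c 0 ≤ M)
    (hbase : ∀ ℓ ≤ N1, c ℓ ≤ M * Real.exp (ℓ * t0))
    (hrec : ∀ ℓ, N1 < ℓ →
      c ℓ ≤ (ℓ : ℝ)⁻¹ * N1 * (1 - Real.exp (-t0)) * ∑ j ∈ Finset.Icc 1 (ℓ - 1), c (ℓ - j)) :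
    ∀ ℓ, c ℓ ≤ M * Real.exp (ℓ * t0) :=
  stmt0_general c M t0 N1 hM ht0 hbase hrec
end

section
/- Let $T_0 : V_\sigma \to V_\tau$ be a linear map between finite-dimensional inner product spaces defined by $T_0(w) = \sum_{i=1}^{N} \langle P_i(w), u_i \rangle v_i$, where the $P_i$ are orthogonal projections onto pairwise orthogonal subspaces, and $u_i \in V_\sigma$, $v_i \in V_\tau$ are vectors with $\|u_i\| \le a_i$ and $\|v_i\| \le b_i$. Then the operator norm satisfies $\|T_0\|^2 \le \left(\sum_i a_i^2\right)\left(\sum_i b_i^2\right)$. -/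
open scoped ComplexInnerProductSpace InnerProductSpace

/-! Each rank-one term `w ↦ ⟪P w, u⟫ v` has norm at most `‖u‖ ‖v‖`, since orthogonal projections
are contractions; the triangle inequality and Cauchy–Schwarz for `∑ aᵢ bᵢ` then give the bound. -/

section

variable {𝕜 V W ι : Type*} [RCLike 𝕜]
  [NormedAddCommGroup V] [InnerProductSpace 𝕜 V] [NormedAddCommGroup W] [InnerProductSpace 𝕜 W]

theorem norm_inner_orthogonalProjectionOnto_smul_le (K : Submodule 𝕜 V)
    [K.HasOrthogonalProjection] (w u : V) (v : W) :
    ‖⟪(K.orthogonalProjectionOnto w : V), u⟫_𝕜 • v‖ ≤ ‖u‖ * ‖v‖ * ‖w‖ :=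
  calc ‖⟪(K.orthogonalProjectionOnto w : V), u⟫_𝕜 • v‖
      = ‖⟪(K.orthogonalProjectionOnto w : V), u⟫_𝕜‖ * ‖v‖ := norm_smul _ _
    _ ≤ ‖(K.orthogonalProjectionOnto w : V)‖ * ‖u‖ * ‖v‖ := by gcongr; exact norm_inner_le_norm _ _
    _ ≤ ‖w‖ * ‖u‖ * ‖v‖ := by gcongr; exact K.norm_orthogonalProjectionOnto_apply_le w
    _ = ‖u‖ * ‖v‖ * ‖w‖ := by ring

theorem norm_sum_inner_orthogonalProjectionOnto_smul_le (s : Finset ι) (K : ι → Submodule 𝕜 V)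
    [∀ i, (K i).HasOrthogonalProjection] (u : ι → V) (v : ι → W) (w : V) :
    ‖∑ i ∈ s, ⟪((K i).orthogonalProjectionOnto w : V), u i⟫_𝕜 • v i‖
      ≤ (∑ i ∈ s, ‖u i‖ * ‖v i‖) * ‖w‖ := by
  rw [Finset.sum_mul]
  exact (norm_sum_le _ _).trans
    (Finset.sum_le_sum fun i _ => norm_inner_orthogonalProjectionOnto_smul_le (K i) w (u i) (v i))

end

theorem sq_sum_mul_le_of_le {ι : Type*} (s : Finset ι) {x y a b : ι → ℝ}
    (hx : ∀ i ∈ s, 0 ≤ x i) (hy : ∀ i ∈ s, 0 ≤ y i)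
    (hxa : ∀ i ∈ s, x i ≤ a i) (hyb : ∀ i ∈ s, y i ≤ b i) :
    (∑ i ∈ s, x i * y i) ^ 2 ≤ (∑ i ∈ s, a i ^ 2) * ∑ i ∈ s, b i ^ 2 :=
  calc (∑ i ∈ s, x i * y i) ^ 2 ≤ (∑ i ∈ s, x i ^ 2) * ∑ i ∈ s, y i ^ 2 :=
        Finset.sum_mul_sq_le_sq_mul_sq s x y
    _ ≤ (∑ i ∈ s, a i ^ 2) * ∑ i ∈ s, b i ^ 2 := by
        gcongr with i hi i hi
        · exact hx i hi
        · exact hxa i hi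
        · exact hy i hi
        · exact hyb i hi

theorem stmt2_general {V W : Type*}
    [NormedAddCommGroup V] [InnerProductSpace ℂ V] [FiniteDimensional ℂ V]
    [NormedAddCommGroup W] [InnerProductSpace ℂ W]
    {N : ℕ} (U : Fin N → Submodule ℂ V)
    (u : Fin N → V) (v : Fin N → W) (a b : Fin N → ℝ)
    (hu : ∀ i, ‖u i‖ ≤ a i) (hv : ∀ i, ‖v i‖ ≤ b i)
    (T0 : V → W)
    (hT0 : ∀ w, T0 w = ∑ i, ⟪(Submodule.orthogonalProjection (U i) w : V), u i⟫ • v i) :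
    ∀ w, ‖T0 w‖ ^ 2 ≤ ((∑ i, a i ^ 2) * (∑ i, b i ^ 2)) * ‖w‖ ^ 2 := by
  intro w
  have hcs : (∑ i, ‖u i‖ * ‖v i‖) ^ 2 ≤ (∑ i, a i ^ 2) * ∑ i, b i ^ 2 :=
    sq_sum_mul_le_of_le _ (fun i _ => norm_nonneg _) (fun i _ => norm_nonneg _)
      (fun i _ => hu i) (fun i _ => hv i)
  calc ‖T0 w‖ ^ 2 ≤ ((∑ i, ‖u i‖ * ‖v i‖) * ‖w‖) ^ 2 := by
        rw [hT0 w]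
        gcongr
        exact norm_sum_inner_orthogonalProjectionOnto_smul_le _ U u v w
    _ ≤ ((∑ i, a i ^ 2) * ∑ i, b i ^ 2) * ‖w‖ ^ 2 := by
        rw [mul_pow]
        gcongr

/-- Lemma 3.2 (abstract form): for `T₀ w = ∑ᵢ ⟪Pᵢ w, uᵢ⟫ vᵢ` with `Pᵢ` orthogonal
projections onto pairwise orthogonal subspaces, `‖uᵢ‖ ≤ aᵢ`, `‖vᵢ‖ ≤ bᵢ`, one has
`‖T₀‖² ≤ (∑ aᵢ²)(∑ bᵢ²)`. -/
theorem stmt2 {V W : Type*}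
    [NormedAddCommGroup V] [InnerProductSpace ℂ V] [FiniteDimensional ℂ V]
    [NormedAddCommGroup W] [InnerProductSpace ℂ W]
    {N : ℕ} (U : Fin N → Submodule ℂ V)
    (horth : ∀ i j, i ≠ j → ∀ x ∈ U i, ∀ y ∈ U j, ⟪x, y⟫ = 0)
    (u : Fin N → V) (v : Fin N → W) (a b : Fin N → ℝ)
    (hu : ∀ i, ‖u i‖ ≤ a i) (hv : ∀ i, ‖v i‖ ≤ b i)
    (T0 : V → W)
    (hT0 : ∀ w, T0 w = ∑ i, ⟪(Submodule.orthogonalProjection (U i) w : V), u i⟫ • v i) :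
    ∀ w, ‖T0 w‖ ^ 2 ≤ ((∑ i, a i ^ 2) * (∑ i, b i ^ 2)) * ‖w‖ ^ 2 :=
  stmt2_general U u v a b hu hv T0 hT0
end

section
/- Let $\delta, \lambda > 0$ with $\lambda_1 < \lambda$, and let $w : [0,\infty) \to \mathbb{R}_{>0}$ satisfy $w(t) = c\, e^{\lambda t} + O(e^{\lambda_1 t})$ for some constant $c > 0$. Then as $T \to \infty$, $\int_{\{t \ge 0 : w(t) < T\}} e^{\delta t}\, dt = \frac{c^{-\delta/\lambda}}{\delta} T^{\delta/\lambda} + O(T^{\eta})$ for some $\eta < \delta/\lambda$. -/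
/-!
Substituting `x = e^{λt}`, the hypothesis reads `|w - c x| ≤ C x^θ` with `θ = max λ₁ 0 / λ < 1`.
For large `T` this traps the sublevel set `{t ≥ 0 | w t < T}` between the sets
`{t ≥ 0 | e^{λt} ≤ (T ∓ B T^θ) / c}`, which are intervals `[0, a]` on which `∫ e^{δt}` is
`(X^{δ/λ} - 1) / δ` in closed form. Since `T^θ = o(T)`, perturbing `X = T / c` by `O(T^θ)` changes
`X^{δ/λ}` by `O(T^{δ/λ + θ - 1})`, a power saving.
-/

open Filter MeasureTheory Real Set

lemma abs_log_one_add_le {r : ℝ} (hr : |r| ≤ 1 / 2) : |log (1 + r)| ≤ 2 * |r| := by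
  have h := abs_log_sub_add_sum_range_le (x := -r) (by rw [abs_neg]; linarith) 0
  simp only [Finset.range_zero, Finset.sum_empty, zero_add, pow_one, abs_neg, sub_neg_eq_add] at h
  calc |log (1 + r)| ≤ |r| / (1 - |r|) := h
    _ ≤ 2 * |r| := by
      rw [div_le_iff₀ (by linarith)]
      nlinarith [abs_nonneg r]

lemma abs_one_add_rpow_sub_one_le {r s : ℝ} (hs : 0 ≤ s) (hr : |r| ≤ 1 / 2)
    (hsr : 2 * s * |r| ≤ 1) : |(1 + r) ^ s - 1| ≤ 4 * s * |r| := by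
  have hlog : |s * log (1 + r)| ≤ 2 * s * |r| := by
    rw [abs_mul, abs_of_nonneg hs]
    nlinarith [abs_log_one_add_le hr]
  rw [rpow_def_of_pos (by linarith [neg_abs_le r]), mul_comm]
  calc |exp (s * log (1 + r)) - 1| ≤ 2 * |s * log (1 + r)| := abs_exp_sub_one_le (hlog.trans hsr)
    _ ≤ 4 * s * |r| := by linarith

lemma abs_add_rpow_sub_rpow_le {x h s : ℝ} (hx : 0 < x) (hs : 0 ≤ s) (hh : |h| ≤ x / 2)
    (hsh : 2 * s * |h| ≤ x) : |(x + h) ^ s - x ^ s| ≤ 4 * s * x ^ (s - 1) * |h| := by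
  have hr : |h / x| = |h| / x := by rw [abs_div, abs_of_pos hx]
  have hr_half : |h / x| ≤ 1 / 2 := by rw [hr, div_le_iff₀ hx]; linarith
  have hrpow := abs_one_add_rpow_sub_one_le hs hr_half
    (by rw [hr, mul_div_assoc', div_le_one hx]; exact hsh)
  have hsplit : x + h = x * (1 + h / x) := by field_simp
  rw [hsplit, mul_rpow hx.le (by linarith [neg_abs_le (h / x)]), ← mul_sub_one, abs_mul,
    abs_of_pos (rpow_pos_of_pos hx s), rpow_sub_one hx.ne']
  calc x ^ s * |(1 + h / x) ^ s - 1| ≤ x ^ s * (4 * s * (|h| / x)) := by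
        rw [← hr]; exact mul_le_mul_of_nonneg_left hrpow (rpow_nonneg hx.le s)
    _ = 4 * s * (x ^ s / x) * |h| := by ring

lemma eventually_mul_rpow_le_self {θ : ℝ} (hθ : θ < 1) (K : ℝ) :
    ∀ᶠ x in atTop, K * x ^ θ ≤ x := by
  filter_upwards [(tendsto_rpow_atTop (sub_pos.2 hθ)).eventually_ge_atTop K,
    eventually_gt_atTop 0] with x hK hx
  calc K * x ^ θ ≤ x ^ (1 - θ) * x ^ θ := mul_le_mul_of_nonneg_right hK (rpow_nonneg hx.le θ)
    _ = x := by rw [← rpow_add hx, sub_add_cancel, rpow_one]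

lemma integral_exp_mul_Icc_zero {δ : ℝ} (hδ : δ ≠ 0) {a : ℝ} (ha : 0 ≤ a) :
    ∫ t in Icc 0 a, exp (δ * t) = (exp (δ * a) - 1) / δ := by
  rw [integral_Icc_eq_integral_Ioc, ← intervalIntegral.integral_of_le ha,
    intervalIntegral.integral_comp_mul_left (fun t => exp t) hδ, integral_exp, mul_zero, exp_zero,
    smul_eq_mul, inv_mul_eq_div]

lemma setOf_exp_mul_le_eq_Icc {lam X : ℝ} (hlam : 0 < lam) (hX : 0 < X) :
    {t | 0 ≤ t ∧ exp (lam * t) ≤ X} = Icc 0 (log X / lam) := by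
  ext t
  simp only [mem_ofPred_eq, mem_Icc, le_div_iff₀ hlam, ← le_log_iff_exp_le hX, mul_comm lam]

lemma setIntegral_exp_mul_of_exp_mul_le {δ lam X : ℝ} (hδ : δ ≠ 0) (hlam : 0 < lam) (hX : 1 ≤ X) :
    ∫ t in {t | 0 ≤ t ∧ exp (lam * t) ≤ X}, exp (δ * t) = (X ^ (δ / lam) - 1) / δ := by
  rw [setOf_exp_mul_le_eq_Icc hlam (by linarith),
    integral_exp_mul_Icc_zero hδ (div_nonneg (log_nonneg hX) hlam.le), rpow_def_of_pos (by linarith)]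
  congr 3
  ring

lemma eventually_le_of_sub_mul_rpow_lt {c θ : ℝ} (hc : 0 < c) (hθ : θ < 1) (C : ℝ) :
    ∀ᶠ T in atTop, ∀ x, 0 ≤ x → c * x - C * x ^ θ < T → x ≤ 2 * T / c := by
  obtain ⟨x₀, hx₀⟩ := eventually_atTop.1 (eventually_mul_rpow_le_self hθ (2 * C / c))
  filter_upwards [eventually_ge_atTop (c * x₀ / 2)] with T hT x hx hxT
  rw [le_div_iff₀ hc]
  rcases le_or_gt x₀ x with hx₀x | hxx₀
  · have h := hx₀ x hx₀x
    rw [div_mul_eq_mul_div, div_le_iff₀ hc] at h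
    linarith
  · nlinarith

lemma exists_sublevel_bounds_of_abs_sub_mul_le {c θ C : ℝ} (hc : 0 < c) (hθ0 : 0 ≤ θ) (hθ1 : θ < 1)
    (hC : 0 ≤ C) :
    ∃ B > 0, ∀ᶠ T in atTop, ∀ x y, 0 ≤ x → |y - c * x| ≤ C * x ^ θ →
      (y < T → c * x ≤ T + B * T ^ θ) ∧ (c * x ≤ T - B * T ^ θ → y < T) := by
  refine ⟨C * (2 / c) ^ θ + 1, by positivity, ?_⟩
  filter_upwards [eventually_le_of_sub_mul_rpow_lt hc hθ1 C, eventually_gt_atTop 0]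
    with T hbound hT x y hx hxy
  have herr : x ≤ 2 * T / c → C * x ^ θ ≤ C * (2 / c) ^ θ * T ^ θ := fun h => by
    rw [mul_assoc, ← mul_rpow (by positivity) hT.le]
    exact mul_le_mul_of_nonneg_left (rpow_le_rpow hx (by rwa [div_mul_eq_mul_div]) hθ0) hC
  have hTθ : 0 < T ^ θ := rpow_pos_of_pos hT θ
  obtain ⟨hlo, hhi⟩ := abs_le.1 hxy
  constructor
  · intro hyT
    have := herr (hbound x hx (by linarith))
    linarith
  · intro hxT
    have hBTθ : 0 ≤ (C * (2 / c) ^ θ + 1) * T ^ θ := by positivity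
    have := herr (by rw [le_div_iff₀ hc]; linarith)
    linarith

lemma abs_setIntegral_sub_le_of_subset_of_subset {α : Type*} [MeasurableSpace α] {μ : Measure α}
    {f : α → ℝ} {s₁ s s₂ : Set α} {M E : ℝ} (hf : 0 ≤ f) (hint : IntegrableOn f s₂ μ)
    (h₁ : s₁ ⊆ s) (h₂ : s ⊆ s₂) (hE₁ : |∫ x in s₁, f x ∂μ - M| ≤ E)
    (hE₂ : |∫ x in s₂, f x ∂μ - M| ≤ E) : |∫ x in s, f x ∂μ - M| ≤ E := by
  have hlo := setIntegral_mono_set (hint.mono_set h₂) (ae_of_all _ hf) h₁.eventuallyLE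
  have hhi := setIntegral_mono_set hint (ae_of_all _ hf) h₂.eventuallyLE
  rw [abs_le] at *
  constructor <;> linarith

lemma abs_setIntegral_exp_mul_sub_le {δ lam x h : ℝ} (hδ : 0 < δ) (hlam : 0 < lam) (hx : 0 < x)
    (hh : |h| ≤ x / 2) (hsh : 2 * (δ / lam) * |h| ≤ x) (hxh : 1 ≤ x + h) :
    |(∫ t in {t | 0 ≤ t ∧ exp (lam * t) ≤ x + h}, exp (δ * t)) - x ^ (δ / lam) / δ| ≤
      (4 * (δ / lam) * x ^ (δ / lam - 1) * |h| + 1) / δ := by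
  rw [setIntegral_exp_mul_of_exp_mul_le hδ.ne' hlam hxh, div_sub_div_same, abs_div, abs_of_pos hδ]
  gcongr
  have := abs_le.1 (abs_add_rpow_sub_rpow_le hx (div_pos hδ hlam).le hh hsh)
  rw [abs_le]
  constructor <;> linarith

lemma exists_eventually_sublevel_sandwich {lam c θ C : ℝ} {w : ℝ → ℝ} (hc : 0 < c) (hθ0 : 0 ≤ θ)
    (hθ1 : θ < 1) (hC : 0 ≤ C)
    (hw : ∀ t, 0 ≤ t → |w t - c * exp (lam * t)| ≤ C * exp (lam * t) ^ θ) :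
    ∃ B > 0, ∀ᶠ T in atTop,
      {t | 0 ≤ t ∧ exp (lam * t) ≤ T / c - B * T ^ θ / c} ⊆ {t | 0 ≤ t ∧ w t < T} ∧
      {t | 0 ≤ t ∧ w t < T} ⊆ {t | 0 ≤ t ∧ exp (lam * t) ≤ T / c + B * T ^ θ / c} := by
  obtain ⟨B, hB, hbounds⟩ := exists_sublevel_bounds_of_abs_sub_mul_le hc hθ0 hθ1 hC
  refine ⟨B, hB, ?_⟩
  filter_upwards [hbounds] with T hT
  refine ⟨fun t ⟨ht, hxt⟩ => ⟨ht, (hT _ _ (exp_pos _).le (hw t ht)).2 ?_⟩,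
    fun t ⟨ht, hwt⟩ => ⟨ht, ?_⟩⟩
  · rwa [← sub_div, le_div_iff₀ hc, mul_comm] at hxt
  · rw [← add_div, le_div_iff₀ hc, mul_comm]
    exact (hT _ _ (exp_pos _).le (hw t ht)).1 hwt

theorem exists_abs_setIntegral_sublevel_sub_le {δ lam c θ C : ℝ} {w : ℝ → ℝ} (hδ : 0 < δ)
    (hlam : 0 < lam) (hc : 0 < c) (hθ0 : 0 ≤ θ) (hθ1 : θ < 1) (hC : 0 ≤ C)
    (hw : ∀ t, 0 ≤ t → |w t - c * exp (lam * t)| ≤ C * exp (lam * t) ^ θ) :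
    ∃ K, ∀ᶠ T in atTop, |(∫ t in {t | 0 ≤ t ∧ w t < T}, exp (δ * t)) - (T / c) ^ (δ / lam) / δ| ≤
      K * T ^ (δ / lam + θ - 1) + 1 / δ := by
  set s := δ / lam
  obtain ⟨B, hB, hsandwich⟩ := exists_eventually_sublevel_sandwich hc hθ0 hθ1 hC hw
  refine ⟨4 * s * B / c ^ s / δ, ?_⟩
  filter_upwards [hsandwich, eventually_gt_atTop 0, eventually_ge_atTop (2 * c),
    eventually_mul_rpow_le_self hθ1 (2 * B), eventually_mul_rpow_le_self hθ1 (2 * s * B)]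
    with T ⟨hsub₁, hsub₂⟩ hT hTc hBT hsBT
  set x := T / c
  set h := B * T ^ θ / c
  have hx : 0 < x := by positivity
  have hh0 : 0 ≤ h := by positivity
  have habs : |h| = h := abs_of_nonneg hh0
  have hhx : |h| ≤ x / 2 := by
    rw [habs, le_div_iff₀ two_pos, div_mul_eq_mul_div, div_le_div_iff_of_pos_right hc]
    linarith
  have hshx : 2 * s * |h| ≤ x := by
    rw [habs, mul_div_assoc', div_le_div_iff_of_pos_right hc]
    linarith
  have hxh : 1 ≤ x - h := by
    rw [← sub_div, le_div_iff₀ hc]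
    linarith
  have hE : (4 * s * x ^ (s - 1) * |h| + 1) / δ =
      4 * s * B / c ^ s / δ * T ^ (s + θ - 1) + 1 / δ := by
    rw [habs, rpow_sub_one hT.ne', rpow_add hT, rpow_sub_one hx.ne', div_rpow hT.le hc.le]
    simp only [x, h]
    field_simp
  rw [← hE]
  refine abs_setIntegral_sub_le_of_subset_of_subset (fun t => (exp_pos _).le) ?_ hsub₁ hsub₂ ?_
    (abs_setIntegral_exp_mul_sub_le hδ hlam hx hhx hshx (by linarith))
  · rw [setOf_exp_mul_le_eq_Icc hlam (by linarith)]
    exact (continuous_const.mul continuous_id).rexp.integrableOn_Icc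
  · simpa only [abs_neg, ← sub_eq_add_neg] using abs_setIntegral_exp_mul_sub_le hδ hlam hx
      (h := -h) (by rwa [abs_neg]) (by rwa [abs_neg]) (by rwa [← sub_eq_add_neg])

theorem stmt8_general (δ lam lam1 c : ℝ) (w : ℝ → ℝ)
    (hδ : 0 < δ) (hlam : 0 < lam) (hlam1 : lam1 < lam) (hc : 0 < c)
    (happrox : ∃ C > 0, ∀ t : ℝ, 0 ≤ t →
      |w t - c * Real.exp (lam * t)| ≤ C * Real.exp (lam1 * t)) :
    ∃ η < δ / lam, ∃ C' > 0, ∀ᶠ T in atTop,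
      |(∫ t in {t : ℝ | 0 ≤ t ∧ w t < T}, Real.exp (δ * t)) -
        c ^ (-(δ / lam)) / δ * T ^ (δ / lam)| ≤ C' * T ^ η := by
  obtain ⟨C, hC, happrox⟩ := happrox
  set θ := max lam1 0 / lam
  have hθ0 : 0 ≤ θ := div_nonneg (le_max_right _ _) hlam.le
  have hθ1 : θ < 1 := (div_lt_one hlam).2 (max_lt hlam1 hlam)
  have hw (t : ℝ) (ht : 0 ≤ t) : |w t - c * exp (lam * t)| ≤ C * exp (lam * t) ^ θ := by
    have hexp : lam * t * θ = max lam1 0 * t := by simp only [θ]; field_simp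
    rw [← exp_mul, hexp]
    exact (happrox t ht).trans <| mul_le_mul_of_nonneg_left
      (exp_le_exp.2 (mul_le_mul_of_nonneg_right (le_max_left _ _) ht)) hC.le
  obtain ⟨K, hK⟩ := exists_abs_setIntegral_sublevel_sub_le hδ hlam hc hθ0 hθ1 hC.le hw
  set η := max (δ / lam + θ - 1) 0
  refine ⟨η, max_lt (by linarith) (div_pos hδ hlam), |K| + 1 / δ, by positivity, ?_⟩
  filter_upwards [hK, eventually_ge_atTop 1] with T hKT hT
  have hmain : c ^ (-(δ / lam)) / δ * T ^ (δ / lam) = (T / c) ^ (δ / lam) / δ := by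
    rw [div_rpow (by linarith) hc.le, rpow_neg hc.le]
    ring
  have hle : T ^ (δ / lam + θ - 1) ≤ T ^ η := rpow_le_rpow_of_exponent_le hT (le_max_left _ _)
  have hone : 1 ≤ T ^ η := one_le_rpow hT (le_max_right _ _)
  have hnonneg : 0 ≤ T ^ (δ / lam + θ - 1) := rpow_nonneg (by linarith) _
  rw [hmain]
  calc _ ≤ K * T ^ (δ / lam + θ - 1) + 1 / δ := hKT
    _ ≤ |K| * T ^ η + 1 / δ * T ^ η := add_le_add
      ((mul_le_mul_of_nonneg_right (le_abs_self K) hnonneg).trans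
        (mul_le_mul_of_nonneg_left hle (abs_nonneg K)))
      (le_mul_of_one_le_right (by positivity) hone)
    _ = (|K| + 1 / δ) * T ^ η := by ring

/-- Analytic core of Proposition 7.13: if `w(t) = c e^{λt} + O(e^{λ₁ t})` with
`λ₁ < λ` and `c > 0`, then
`∫_{t ≥ 0, w(t) < T} e^{δt} dt = (c^{-δ/λ}/δ) T^{δ/λ} + O(T^η)` for some `η < δ/λ`. -/
theorem stmt8 (δ lam lam1 c : ℝ) (w : ℝ → ℝ)
    (hδ : 0 < δ) (hlam : 0 < lam) (hlam1 : lam1 < lam) (hc : 0 < c)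
    (hwpos : ∀ t : ℝ, 0 ≤ t → 0 < w t) (hmeas : Measurable w)
    (happrox : ∃ C > 0, ∀ t : ℝ, 0 ≤ t →
      |w t - c * Real.exp (lam * t)| ≤ C * Real.exp (lam1 * t)) :
    ∃ η < δ / lam, ∃ C' > 0, ∀ᶠ T in atTop,
      |(∫ t in {t : ℝ | 0 ≤ t ∧ w t < T}, Real.exp (δ * t)) -
        c ^ (-(δ / lam)) / δ * T ^ (δ / lam)| ≤ C' * T ^ η :=
  stmt8_general δ lam lam1 c w hδ hlam hlam1 hc happrox
end
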